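/- arXiv:2410.06174 — 9 statements merged into one kernel-verified Lean document; each statement's English description precedes it below -/
import Mathlib

section
/- Assume the discrete continuity constraint holds at node i, and that dadd i j ≥ 0 and dp i j ≥ 0 for all j ≠ i. Then the nodal energy production satisfies the local energy inequality ⟪u i, RHS i⟫ ≤ Σ_{j ≠ i} F i j. (Since m i · d/dt(‖u i‖²/2) = ⟪u i, m i • u i'⟫ = ⟪u i, RHS i⟫ along solutions of the semi-discrete scheme, this is the semi-discrete local energy inequality of Theorem 1.) -/
/-!
Expanding `⟪u i, RHS i⟫` edge by edge, each edge contributes exactly the flux `F i j`, minus the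
artificial-viscosity dissipation `(dadd i j / 2)‖u j - u i‖² + (dp i j / 2)(p j - p i)²`, minus
`p i` times the edge's share of the continuity residual. Summed over `j ≠ i`, the residual terms
vanish by the discrete continuity constraint and the dissipation is nonnegative.
-/

open scoped RealInnerProductSpace

namespace LocalEnergy

variable {E : Type*} [NormedAddCommGroup E]

/-- The dissipation `-G i j` of the edge from node `i` to node `j`. -/
noncomputable def edgeDissipation (dadd dp pi pj : ℝ) (ui uj : E) : ℝ :=
  dadd / 2 * ‖uj - ui‖ ^ 2 + dp / 2 * (pj - pi) ^ 2

theorem edgeDissipation_nonneg {dadd dp : ℝ} (hdadd : 0 ≤ dadd) (hdp : 0 ≤ dp)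
    (pi pj : ℝ) (ui uj : E) : 0 ≤ edgeDissipation dadd dp pi pj ui uj := by
  unfold edgeDissipation
  positivity

variable [InnerProductSpace ℝ E]

/-- The energy flux `F i j` from node `i` to node `j`, with `ã i j` written out. -/
noncomputable def edgeFlux (dadd dp pi pj : ℝ) (ui uj c : E) : ℝ :=
  (⟪(1 / 2 : ℝ) • (uj + ui), c⟫ / 2) * ‖uj - ui‖ ^ 2
    + (1 / 2) * ⟪c, uj - ui⟫ * (pj - pi)
    - ⟪(1 / 2 : ℝ) • (uj + ui), c⟫ * (‖uj‖ ^ 2 / 2 + pj + ‖ui‖ ^ 2 / 2 + pi)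
    + dadd * (‖uj‖ ^ 2 / 2 - ‖ui‖ ^ 2 / 2)
    + dp * (pj ^ 2 / 2 - pi ^ 2 / 2)

theorem inner_edgeMomentum_eq {a : ℝ} (dadd dp pi pj : ℝ) {ui uj c : E}
    (ha : a = ⟪(1 / 2 : ℝ) • (uj + ui), c⟫) :
    ⟪ui, (dadd - a) • (uj - ui) - (pj - pi) • c⟫ - a * ‖ui‖ ^ 2
      = edgeFlux dadd dp pi pj ui uj c - edgeDissipation dadd dp pi pj ui uj
        - pi * (dp * (pj - pi) - ⟪uj + ui, c⟫) := by
  have hnorm_sub : ‖uj - ui‖ ^ 2 = ‖uj‖ ^ 2 - 2 * ⟪ui, uj⟫ + ‖ui‖ ^ 2 := by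
    rw [norm_sub_sq_real, real_inner_comm]
  subst ha
  simp only [edgeFlux, edgeDissipation, hnorm_sub, inner_sub_right, inner_add_left,
    real_inner_smul_left, real_inner_smul_right, real_inner_self_eq_norm_sq,
    real_inner_comm ui c, real_inner_comm uj c, real_inner_comm uj ui]
  ring

theorem inner_momentum_eq {ι : Type*} (s : Finset ι) (ui : E) (pi : ℝ) (u c : ι → E)
    (p a dadd dp : ι → ℝ) (ha : ∀ j ∈ s, a j = ⟪(1 / 2 : ℝ) • (u j + ui), c j⟫) :
    ⟪ui, (∑ j ∈ s, ((dadd j - a j) • (u j - ui) - (p j - pi) • c j))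
        - (∑ j ∈ s, a j) • ui⟫
      = ∑ j ∈ s, edgeFlux (dadd j) (dp j) pi (p j) ui (u j) (c j)
        - ∑ j ∈ s, edgeDissipation (dadd j) (dp j) pi (p j) ui (u j)
        - pi * ∑ j ∈ s, (dp j * (p j - pi) - ⟪u j + ui, c j⟫) := by
  rw [inner_sub_right, inner_sum, real_inner_smul_right, real_inner_self_eq_norm_sq,
    Finset.sum_mul, ← Finset.sum_sub_distrib,
    Finset.sum_congr rfl fun j hj => inner_edgeMomentum_eq (dadd j) (dp j) pi (p j) (ha j hj),
    Finset.mul_sum, Finset.sum_sub_distrib, Finset.sum_sub_distrib]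

end LocalEnergy

open LocalEnergy in
theorem local_energy_inequality_general
    (d N : ℕ)
    (u : Fin N → EuclideanSpace ℝ (Fin d)) (p : Fin N → ℝ)
    (c : Fin N → Fin N → EuclideanSpace ℝ (Fin d))
    (atil dadd dp F : Fin N → Fin N → ℝ)
    (hatil : ∀ i j, atil i j = ⟪((1 : ℝ) / 2) • (u j + u i), c i j⟫)
    (hF : ∀ i j, i ≠ j → F i j =
      (atil i j / 2) * ‖u j - u i‖ ^ 2
      + (1 / 2) * ⟪c i j, u j - u i⟫ * (p j - p i)
      - ⟪((1 : ℝ) / 2) • (u j + u i), c i j⟫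
          * (‖u j‖ ^ 2 / 2 + p j + ‖u i‖ ^ 2 / 2 + p i)
      + dadd i j * (‖u j‖ ^ 2 / 2 - ‖u i‖ ^ 2 / 2)
      + dp i j * (p j ^ 2 / 2 - p i ^ 2 / 2))
    (RHS : Fin N → EuclideanSpace ℝ (Fin d))
    (hRHS : ∀ i, RHS i =
      (∑ j ∈ Finset.univ.erase i,
        ((dadd i j - atil i j) • (u j - u i) - (p j - p i) • c i j))
      - (∑ j ∈ Finset.univ.erase i, atil i j) • u i)
    (i : Fin N)
    (hcont : ∑ j ∈ Finset.univ.erase i,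
      (dp i j * (p j - p i) - ⟪u j + u i, c i j⟫) = 0)
    (hdadd_nn : ∀ j, j ≠ i → 0 ≤ dadd i j)
    (hdp_nn : ∀ j, j ≠ i → 0 ≤ dp i j) :
    ⟪u i, RHS i⟫ ≤ ∑ j ∈ Finset.univ.erase i, F i j := by
  have hflux : ∑ j ∈ Finset.univ.erase i, F i j
      = ∑ j ∈ Finset.univ.erase i,
          edgeFlux (dadd i j) (dp i j) (p i) (p j) (u i) (u j) (c i j) :=
    Finset.sum_congr rfl fun j hj => by
      rw [hF i j (Finset.ne_of_mem_erase hj).symm, hatil, edgeFlux]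
  have hdiss : 0 ≤ ∑ j ∈ Finset.univ.erase i,
      edgeDissipation (dadd i j) (dp i j) (p i) (p j) (u i) (u j) :=
    Finset.sum_nonneg fun j hj =>
      edgeDissipation_nonneg (hdadd_nn j (Finset.ne_of_mem_erase hj))
        (hdp_nn j (Finset.ne_of_mem_erase hj)) _ _ _ _
  rw [hRHS, inner_momentum_eq _ _ _ _ _ _ _ _ _ fun j _ => hatil i j, hcont, hflux]
  linarith

/-- Local semi-discrete energy inequality (Theorem 1): assuming the discrete
continuity constraint at node `i` and nonnegativity of `dadd i j` and `dp i j`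
for `j ≠ i`, the nodal energy production satisfies
`⟪u i, RHS i⟫ ≤ Σ_{j ≠ i} F i j`. -/
theorem local_energy_inequality
    (d N : ℕ) (hd : 1 ≤ d) (hN : 1 ≤ N)
    (u : Fin N → EuclideanSpace ℝ (Fin d)) (p : Fin N → ℝ)
    (c : Fin N → Fin N → EuclideanSpace ℝ (Fin d))
    (hc : ∀ i j, c j i = -c i j)
    (atil dadd dp F : Fin N → Fin N → ℝ)
    (hatil : ∀ i j, atil i j = ⟪((1 : ℝ) / 2) • (u j + u i), c i j⟫)
    (hdadd_symm : ∀ i j, dadd i j = dadd j i)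
    (hdp_symm : ∀ i j, dp i j = dp j i)
    (hF : ∀ i j, i ≠ j → F i j =
      (atil i j / 2) * ‖u j - u i‖ ^ 2
      + (1 / 2) * ⟪c i j, u j - u i⟫ * (p j - p i)
      - ⟪((1 : ℝ) / 2) • (u j + u i), c i j⟫
          * (‖u j‖ ^ 2 / 2 + p j + ‖u i‖ ^ 2 / 2 + p i)
      + dadd i j * (‖u j‖ ^ 2 / 2 - ‖u i‖ ^ 2 / 2)
      + dp i j * (p j ^ 2 / 2 - p i ^ 2 / 2))
    (RHS : Fin N → EuclideanSpace ℝ (Fin d))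
    (hRHS : ∀ i, RHS i =
      (∑ j ∈ Finset.univ.erase i,
        ((dadd i j - atil i j) • (u j - u i) - (p j - p i) • c i j))
      - (∑ j ∈ Finset.univ.erase i, atil i j) • u i)
    (i : Fin N)
    (hcont : ∑ j ∈ Finset.univ.erase i,
      (dp i j * (p j - p i) - ⟪u j + u i, c i j⟫) = 0)
    (hdadd_nn : ∀ j, j ≠ i → 0 ≤ dadd i j)
    (hdp_nn : ∀ j, j ≠ i → 0 ≤ dp i j) :
    ⟪u i, RHS i⟫ ≤ ∑ j ∈ Finset.univ.erase i, F i j :=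
  local_energy_inequality_general d N u p c atil dadd dp F hatil hF RHS hRHS i hcont hdadd_nn hdp_nn
end

section
/- Assume the discrete continuity constraint holds at node i. Then the nodal energy production admits the exact flux decomposition ⟪u i, RHS i⟫ = Σ_{j ≠ i} (F i j + G i j), where F is the numerical energy flux and G i j = -(dadd i j / 2)·‖u j - u i‖² - (dp i j / 2)·(p j - p i)² collects the symmetric dissipative terms. (No sign assumptions on dadd or dp are needed.) -/
open scoped RealInnerProductSpace BigOperators

/-! Edge by edge, `F i j + G i j` equals the contribution of `j` to `⟪u i, RHS i⟫` plus
`p i` times the contribution of `j` to the continuity residual; this is a polynomial identity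
in inner products. Summing over `j ≠ i`, the pressure part is `p i` times the residual, which
vanishes. -/

section InnerProduct

variable {E : Type*} [NormedAddCommGroup E] [InnerProductSpace ℝ E]

theorem energy_flux_add_dissipation_eq (ui uj c : E) (pi pj a dadd dp : ℝ)
    (ha : a = ⟪((1 : ℝ) / 2) • (uj + ui), c⟫) :
    ((a / 2) * ‖uj - ui‖ ^ 2
        + (1 / 2) * ⟪c, uj - ui⟫ * (pj - pi)
        - ⟪((1 : ℝ) / 2) • (uj + ui), c⟫ * (‖uj‖ ^ 2 / 2 + pj + ‖ui‖ ^ 2 / 2 + pi)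
        + dadd * (‖uj‖ ^ 2 / 2 - ‖ui‖ ^ 2 / 2)
        + dp * (pj ^ 2 / 2 - pi ^ 2 / 2))
      + (-(dadd / 2) * ‖uj - ui‖ ^ 2 - (dp / 2) * (pj - pi) ^ 2)
      = (⟪ui, (dadd - a) • (uj - ui) - (pj - pi) • c⟫ - a * ‖ui‖ ^ 2)
        + pi * (dp * (pj - pi) - ⟪uj + ui, c⟫) := by
  subst ha
  simp only [inner_sub_right, inner_add_left, real_inner_smul_left, real_inner_smul_right,
    norm_sub_sq_real, real_inner_self_eq_norm_sq, real_inner_comm ui uj, real_inner_comm c uj,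
    real_inner_comm c ui]
  ring

theorem inner_sum_sub_smul {ι : Type*} (s : Finset ι) (v : E) (w : ι → E) (a : ι → ℝ) :
    ⟪v, (∑ j ∈ s, w j) - (∑ j ∈ s, a j) • v⟫ = ∑ j ∈ s, (⟪v, w j⟫ - a j * ‖v‖ ^ 2) := by
  rw [inner_sub_right, inner_sum, real_inner_smul_right, real_inner_self_eq_norm_sq,
    Finset.sum_mul, Finset.sum_sub_distrib]

end InnerProduct

theorem nodal_energy_flux_decomposition_general
    (d N : ℕ)
    (u : Fin N → EuclideanSpace ℝ (Fin d)) (p : Fin N → ℝ)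
    (c : Fin N → Fin N → EuclideanSpace ℝ (Fin d))
    (atil dadd dp F G : Fin N → Fin N → ℝ)
    (hatil : ∀ i j, atil i j = ⟪((1 : ℝ) / 2) • (u j + u i), c i j⟫)
    (hF : ∀ i j, i ≠ j → F i j =
      (atil i j / 2) * ‖u j - u i‖ ^ 2
      + (1 / 2) * ⟪c i j, u j - u i⟫ * (p j - p i)
      - ⟪((1 : ℝ) / 2) • (u j + u i), c i j⟫
          * (‖u j‖ ^ 2 / 2 + p j + ‖u i‖ ^ 2 / 2 + p i)
      + dadd i j * (‖u j‖ ^ 2 / 2 - ‖u i‖ ^ 2 / 2)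
      + dp i j * (p j ^ 2 / 2 - p i ^ 2 / 2))
    (hG : ∀ i j, i ≠ j → G i j =
      -(dadd i j / 2) * ‖u j - u i‖ ^ 2 - (dp i j / 2) * (p j - p i) ^ 2)
    (RHS : Fin N → EuclideanSpace ℝ (Fin d))
    (hRHS : ∀ i, RHS i =
      (∑ j ∈ Finset.univ.erase i,
        ((dadd i j - atil i j) • (u j - u i) - (p j - p i) • c i j))
      - (∑ j ∈ Finset.univ.erase i, atil i j) • u i)
    (i : Fin N)
    (hcont : ∑ j ∈ Finset.univ.erase i,
      (dp i j * (p j - p i) - ⟪u j + u i, c i j⟫) = 0) :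
    ⟪u i, RHS i⟫ = ∑ j ∈ Finset.univ.erase i, (F i j + G i j) := by
  have hedge : ∀ j ∈ Finset.univ.erase i, F i j + G i j =
      (⟪u i, (dadd i j - atil i j) • (u j - u i) - (p j - p i) • c i j⟫
          - atil i j * ‖u i‖ ^ 2)
        + p i * (dp i j * (p j - p i) - ⟪u j + u i, c i j⟫) := by
    intro j hj
    have hij : i ≠ j := (Finset.ne_of_mem_erase hj).symm
    rw [hF i j hij, hG i j hij]
    exact energy_flux_add_dissipation_eq _ _ _ _ _ _ _ _ (hatil i j)
  rw [Finset.sum_congr rfl hedge, Finset.sum_add_distrib, ← Finset.mul_sum, hcont, mul_zero,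
    add_zero, hRHS i, inner_sum_sub_smul]

/-- Exact nodal energy flux decomposition: under the discrete continuity
constraint at node `i`, `⟪u i, RHS i⟫ = Σ_{j ≠ i} (F i j + G i j)`. -/
theorem nodal_energy_flux_decomposition
    (d N : ℕ) (hd : 1 ≤ d) (hN : 1 ≤ N)
    (u : Fin N → EuclideanSpace ℝ (Fin d)) (p : Fin N → ℝ)
    (c : Fin N → Fin N → EuclideanSpace ℝ (Fin d))
    (hc : ∀ i j, c j i = -c i j)
    (atil dadd dp F G : Fin N → Fin N → ℝ)
    (hatil : ∀ i j, atil i j = ⟪((1 : ℝ) / 2) • (u j + u i), c i j⟫)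
    (hdadd_symm : ∀ i j, dadd i j = dadd j i)
    (hdp_symm : ∀ i j, dp i j = dp j i)
    (hF : ∀ i j, i ≠ j → F i j =
      (atil i j / 2) * ‖u j - u i‖ ^ 2
      + (1 / 2) * ⟪c i j, u j - u i⟫ * (p j - p i)
      - ⟪((1 : ℝ) / 2) • (u j + u i), c i j⟫
          * (‖u j‖ ^ 2 / 2 + p j + ‖u i‖ ^ 2 / 2 + p i)
      + dadd i j * (‖u j‖ ^ 2 / 2 - ‖u i‖ ^ 2 / 2)
      + dp i j * (p j ^ 2 / 2 - p i ^ 2 / 2))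
    (hG : ∀ i j, i ≠ j → G i j =
      -(dadd i j / 2) * ‖u j - u i‖ ^ 2 - (dp i j / 2) * (p j - p i) ^ 2)
    (RHS : Fin N → EuclideanSpace ℝ (Fin d))
    (hRHS : ∀ i, RHS i =
      (∑ j ∈ Finset.univ.erase i,
        ((dadd i j - atil i j) • (u j - u i) - (p j - p i) • c i j))
      - (∑ j ∈ Finset.univ.erase i, atil i j) • u i)
    (i : Fin N)
    (hcont : ∑ j ∈ Finset.univ.erase i,
      (dp i j * (p j - p i) - ⟪u j + u i, c i j⟫) = 0) :
    ⟪u i, RHS i⟫ = ∑ j ∈ Finset.univ.erase i, (F i j + G i j) :=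
  nodal_energy_flux_decomposition_general d N u p c atil dadd dp F G hatil hF hG RHS hRHS i hcont
end

section
/- The numerical energy flux is skew-symmetric: for all i ≠ j, F i j = - F j i. -/
open scoped RealInnerProductSpace BigOperators

/-- Skew-symmetry of the numerical energy flux: `F i j = -F j i` for `i ≠ j`. -/
theorem numerical_energy_flux_skew_symmetric
    (d N : ℕ) (hd : 1 ≤ d) (hN : 1 ≤ N)
    (u : Fin N → EuclideanSpace ℝ (Fin d)) (p : Fin N → ℝ)
    (c : Fin N → Fin N → EuclideanSpace ℝ (Fin d))
    (hc : ∀ i j, c j i = -c i j)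
    (atil dadd dp F : Fin N → Fin N → ℝ)
    (hatil : ∀ i j, atil i j = ⟪((1 : ℝ) / 2) • (u j + u i), c i j⟫)
    (hdadd_symm : ∀ i j, dadd i j = dadd j i)
    (hdp_symm : ∀ i j, dp i j = dp j i)
    (hF : ∀ i j, i ≠ j → F i j =
      (atil i j / 2) * ‖u j - u i‖ ^ 2
      + (1 / 2) * ⟪c i j, u j - u i⟫ * (p j - p i)
      - ⟪((1 : ℝ) / 2) • (u j + u i), c i j⟫
          * (‖u j‖ ^ 2 / 2 + p j + ‖u i‖ ^ 2 / 2 + p i)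
      + dadd i j * (‖u j‖ ^ 2 / 2 - ‖u i‖ ^ 2 / 2)
      + dp i j * (p j ^ 2 / 2 - p i ^ 2 / 2)) :
    ∀ i j, i ≠ j → F i j = -F j i := by
  intro i j hij
  rw [hF i j hij, hF j i hij.symm, hatil, hatil, hc i j, hdadd_symm j i, hdp_symm j i,
    norm_sub_rev (u i) (u j), add_comm (u i) (u j)]
  simp only [inner_neg_left, inner_neg_right, inner_sub_right]
  ring
end

section
/- The numerical energy flux is consistent with the exact energy flux q(u,p) = (‖u‖²/2 + p)·u: if i ≠ j and the nodal states coincide, u i = u j = w and p i = p j = q, then F i j = -⟪w, c i j⟫·(‖w‖² + 2·q); in particular, if c i j ≠ 0, the numerical flux Q := -F i j / (2·‖c i j‖) equals (‖w‖²/2 + q)·⟪w, c i j / ‖c i j‖⟫, i.e., the exact energy flux in the direction of the unit vector n i j = c i j / ‖c i j‖. -/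
open scoped RealInnerProductSpace

noncomputable section EnergyFlux

variable {E : Type*} [NormedAddCommGroup E] [InnerProductSpace ℝ E]

def exactEnergyFlux (w : E) (q : ℝ) : E := (‖w‖ ^ 2 / 2 + q) • w

def numericalEnergyFlux (atil dadd dp : ℝ) (c ui uj : E) (pi pj : ℝ) : ℝ :=
  (atil / 2) * ‖uj - ui‖ ^ 2
    + (1 / 2) * ⟪c, uj - ui⟫ * (pj - pi)
    - ⟪((1 : ℝ) / 2) • (uj + ui), c⟫ * (‖uj‖ ^ 2 / 2 + pj + ‖ui‖ ^ 2 / 2 + pi)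
    + dadd * (‖uj‖ ^ 2 / 2 - ‖ui‖ ^ 2 / 2)
    + dp * (pj ^ 2 / 2 - pi ^ 2 / 2)

theorem numericalEnergyFlux_self (atil dadd dp : ℝ) (c w : E) (q : ℝ) :
    numericalEnergyFlux atil dadd dp c w w q q = -⟪w, c⟫ * (‖w‖ ^ 2 + 2 * q) := by
  have hmean : ((1 : ℝ) / 2) • (w + w) = w := by module
  simp only [numericalEnergyFlux, hmean, sub_self, norm_zero, inner_zero_right]
  ring

theorem numericalEnergyFlux_self_eq_inner_exactEnergyFlux (atil dadd dp : ℝ) (c w : E) (q : ℝ) :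
    numericalEnergyFlux atil dadd dp c w w q q = -2 * ⟪exactEnergyFlux w q, c⟫ := by
  rw [numericalEnergyFlux_self, exactEnergyFlux, real_inner_smul_left]
  ring

end EnergyFlux

theorem numerical_energy_flux_consistent_general
    (d N : ℕ)
    (u : Fin N → EuclideanSpace ℝ (Fin d)) (p : Fin N → ℝ)
    (c : Fin N → Fin N → EuclideanSpace ℝ (Fin d))
    (atil dadd dp F : Fin N → Fin N → ℝ)
    (hF : ∀ i j, i ≠ j → F i j =
      (atil i j / 2) * ‖u j - u i‖ ^ 2
      + (1 / 2) * ⟪c i j, u j - u i⟫ * (p j - p i)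
      - ⟪((1 : ℝ) / 2) • (u j + u i), c i j⟫
          * (‖u j‖ ^ 2 / 2 + p j + ‖u i‖ ^ 2 / 2 + p i)
      + dadd i j * (‖u j‖ ^ 2 / 2 - ‖u i‖ ^ 2 / 2)
      + dp i j * (p j ^ 2 / 2 - p i ^ 2 / 2))
    (i j : Fin N) (hij : i ≠ j)
    (w : EuclideanSpace ℝ (Fin d)) (q : ℝ)
    (hui : u i = w) (huj : u j = w) (hpi : p i = q) (hpj : p j = q) :
    F i j = -⟪w, c i j⟫ * (‖w‖ ^ 2 + 2 * q) ∧
    (c i j ≠ 0 →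
      -F i j / (2 * ‖c i j‖) =
        (‖w‖ ^ 2 / 2 + q) * ⟪w, ‖c i j‖⁻¹ • c i j⟫) := by
  have hFij : F i j = numericalEnergyFlux (atil i j) (dadd i j) (dp i j) (c i j) w w q q := by
    rw [hF i j hij, hui, huj, hpi, hpj]
    rfl
  refine ⟨hFij.trans (numericalEnergyFlux_self ..), fun _ => ?_⟩
  calc -F i j / (2 * ‖c i j‖)
      = ⟪exactEnergyFlux w q, c i j⟫ / ‖c i j‖ := by
        rw [hFij, numericalEnergyFlux_self_eq_inner_exactEnergyFlux]
        field_simp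
    _ = (‖w‖ ^ 2 / 2 + q) * ⟪w, ‖c i j‖⁻¹ • c i j⟫ := by
        rw [exactEnergyFlux, real_inner_smul_left, real_inner_smul_right]
        ring

/-- Consistency of the numerical energy flux with the exact energy flux
`q(u,p) = (‖u‖²/2 + p)·u`: for coinciding nodal states the numerical flux
reduces to the exact flux in the direction `n i j = c i j / ‖c i j‖`. -/
theorem numerical_energy_flux_consistent
    (d N : ℕ) (hd : 1 ≤ d) (hN : 1 ≤ N)
    (u : Fin N → EuclideanSpace ℝ (Fin d)) (p : Fin N → ℝ)
    (c : Fin N → Fin N → EuclideanSpace ℝ (Fin d))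
    (hc : ∀ i j, c j i = -c i j)
    (atil dadd dp F : Fin N → Fin N → ℝ)
    (hatil : ∀ i j, atil i j = ⟪((1 : ℝ) / 2) • (u j + u i), c i j⟫)
    (hdadd_symm : ∀ i j, dadd i j = dadd j i)
    (hdp_symm : ∀ i j, dp i j = dp j i)
    (hF : ∀ i j, i ≠ j → F i j =
      (atil i j / 2) * ‖u j - u i‖ ^ 2
      + (1 / 2) * ⟪c i j, u j - u i⟫ * (p j - p i)
      - ⟪((1 : ℝ) / 2) • (u j + u i), c i j⟫
          * (‖u j‖ ^ 2 / 2 + p j + ‖u i‖ ^ 2 / 2 + p i)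
      + dadd i j * (‖u j‖ ^ 2 / 2 - ‖u i‖ ^ 2 / 2)
      + dp i j * (p j ^ 2 / 2 - p i ^ 2 / 2))
    (i j : Fin N) (hij : i ≠ j)
    (w : EuclideanSpace ℝ (Fin d)) (q : ℝ)
    (hui : u i = w) (huj : u j = w) (hpi : p i = q) (hpj : p j = q) :
    F i j = -⟪w, c i j⟫ * (‖w‖ ^ 2 + 2 * q) ∧
    (c i j ≠ 0 →
      -F i j / (2 * ‖c i j‖) =
        (‖w‖ ^ 2 / 2 + q) * ⟪w, ‖c i j‖⁻¹ • c i j⟫) :=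
  numerical_energy_flux_consistent_general d N u p c atil dadd dp F hF i j hij w q hui huj hpi hpj
end

section
/- Assume the discrete continuity constraint holds at every node. Then the total energy production equals the total dissipation: Σ_i ⟪u i, RHS i⟫ = - Σ_i Σ_{j ≠ i} ((dadd i j / 2)·‖u j - u i‖² + (dp i j / 2)·(p j - p i)²). In particular, if dadd i j ≥ 0 and dp i j ≥ 0 for all i ≠ j, then Σ_i ⟪u i, RHS i⟫ ≤ 0. -/
open scoped RealInnerProductSpace

/-!
Pair the momentum equation with `u` and sum over the nodes. Each off-diagonal double sum is
symmetrized by swapping `i` and `j`: the viscous part becomes `-Σ (dadd/2)‖u j - u i‖²`, the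
advective part `Σ ã i j ⟪u i, u j⟫` cancels because `ã` is antisymmetric, and the pressure
part collapses to `-Σ_i p i Σ_j ⟪u j + u i, c i j⟫`. The continuity constraint turns the inner
sum into `Σ_j dp i j (p j - p i)`, which symmetrizes to the pressure dissipation.
-/

open Finset

section

variable {ι E : Type*} [NormedAddCommGroup E] [InnerProductSpace ℝ E]

lemma inner_momentum_eq (s : Finset ι) (i : ι) (u c : ι → E) (p dadd a : ι → ℝ) :
    ⟪u i, ∑ j ∈ s, ((dadd j - a j) • (u j - u i) - (p j - p i) • c j)
        - (∑ j ∈ s, a j) • u i⟫ =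
      ∑ j ∈ s, (dadd j * ⟪u i, u j - u i⟫ - a j * ⟪u i, u j⟫ - (p j - p i) * ⟪u i, c j⟫) := by
  simp only [inner_sub_right, inner_sum, real_inner_smul_right, sum_mul, ← sum_sub_distrib]
  refine sum_congr rfl fun j _ => ?_
  ring

variable [Fintype ι] [DecidableEq ι]

lemma sum_sum_erase_comm {M : Type*} [AddCommMonoid M] (f : ι → ι → M) :
    ∑ i, ∑ j ∈ univ.erase i, f i j = ∑ i, ∑ j ∈ univ.erase i, f j i := by
  rw [sum_comm' (s' := fun j => univ.erase j) (t' := univ)]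
  intro i j
  simp [ne_comm]

lemma sum_sum_erase_eq_zero_of_antisymm {M : Type*} [AddCommGroup M] [IsAddTorsionFree M]
    (f : ι → ι → M) (hf : ∀ i j, f j i = -f i j) :
    ∑ i, ∑ j ∈ univ.erase i, f i j = 0 := by
  refine self_eq_neg.mp ((sum_sum_erase_comm f).trans ?_)
  simp only [← sum_neg_distrib]
  exact sum_congr rfl fun i _ => sum_congr rfl fun j _ => hf i j

lemma sum_sum_erase_mul_inner_sub_self (w : ι → ι → ℝ) (hw : ∀ i j, w i j = w j i)
    (x : ι → E) :
    ∑ i, ∑ j ∈ univ.erase i, w i j * ⟪x i, x j - x i⟫ =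
      -∑ i, ∑ j ∈ univ.erase i, w i j / 2 * ‖x j - x i‖ ^ 2 := by
  have split : ∀ i j, w i j * ⟪x i, x j - x i⟫ =
      -(w i j / 2 * ‖x j - x i‖ ^ 2) + w i j / 2 * (‖x j‖ ^ 2 - ‖x i‖ ^ 2) := by
    intro i j
    rw [norm_sub_sq_real, inner_sub_right, real_inner_self_eq_norm_sq, real_inner_comm]
    ring
  have transport : ∑ i, ∑ j ∈ univ.erase i, w i j / 2 * (‖x j‖ ^ 2 - ‖x i‖ ^ 2) = 0 :=
    sum_sum_erase_eq_zero_of_antisymm _ fun i j => by rw [hw]; ring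
  simp only [split, sum_add_distrib, sum_neg_distrib, transport, add_zero]

lemma sum_sum_erase_mul_mul_sub_self (w : ι → ι → ℝ) (hw : ∀ i j, w i j = w j i)
    (x : ι → ℝ) :
    ∑ i, ∑ j ∈ univ.erase i, w i j * (x i * (x j - x i)) =
      -∑ i, ∑ j ∈ univ.erase i, w i j / 2 * (x j - x i) ^ 2 := by
  simpa only [RCLike.inner_apply, conj_trivial, Real.norm_eq_abs, sq_abs, mul_comm _ (x _)] using
    sum_sum_erase_mul_inner_sub_self w hw x

lemma sum_sum_erase_sub_mul_inner (p : ι → ℝ) (u : ι → E) (c : ι → ι → E)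
    (hc : ∀ i j, c j i = -c i j) :
    ∑ i, ∑ j ∈ univ.erase i, (p j - p i) * ⟪u i, c i j⟫ =
      -∑ i, p i * ∑ j ∈ univ.erase i, ⟪u j + u i, c i j⟫ := by
  rw [eq_neg_iff_add_eq_zero]
  simp only [mul_sum, ← sum_add_distrib]
  refine sum_sum_erase_eq_zero_of_antisymm _ fun i j => ?_
  simp only [hc i j, inner_neg_right, inner_add_left]
  ring

theorem sum_inner_momentum_eq_neg_dissipation (u : ι → E) (p : ι → ℝ) (c : ι → ι → E)
    (hc : ∀ i j, c j i = -c i j) (atil dadd dp : ι → ι → ℝ)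
    (hatil : ∀ i j, atil i j = ⟪((1 : ℝ) / 2) • (u j + u i), c i j⟫)
    (hdadd : ∀ i j, dadd i j = dadd j i) (hdp : ∀ i j, dp i j = dp j i)
    (hcont : ∀ i, ∑ j ∈ univ.erase i, (dp i j * (p j - p i) - ⟪u j + u i, c i j⟫) = 0) :
    ∑ i, ⟪u i, ∑ j ∈ univ.erase i, ((dadd i j - atil i j) • (u j - u i) - (p j - p i) • c i j)
        - (∑ j ∈ univ.erase i, atil i j) • u i⟫ =
      -∑ i, ∑ j ∈ univ.erase i,
        (dadd i j / 2 * ‖u j - u i‖ ^ 2 + dp i j / 2 * (p j - p i) ^ 2) := by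
  have advection : ∑ i, ∑ j ∈ univ.erase i, atil i j * ⟪u i, u j⟫ = 0 :=
    sum_sum_erase_eq_zero_of_antisymm _ fun i j => by
      rw [hatil, hatil, hc, inner_neg_right, add_comm (u i), real_inner_comm (u i)]
      ring
  have flux : ∀ i, ∑ j ∈ univ.erase i, ⟪u j + u i, c i j⟫ =
      ∑ j ∈ univ.erase i, dp i j * (p j - p i) := fun i => by
    rw [eq_comm, ← sub_eq_zero, ← sum_sub_distrib, hcont]
  have pressure : ∑ i, ∑ j ∈ univ.erase i, (p j - p i) * ⟪u i, c i j⟫ =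
      ∑ i, ∑ j ∈ univ.erase i, dp i j / 2 * (p j - p i) ^ 2 := by
    rw [sum_sum_erase_sub_mul_inner p u c hc, neg_eq_iff_eq_neg,
      ← sum_sum_erase_mul_mul_sub_self dp hdp p]
    simp only [flux, mul_sum, mul_left_comm (p _)]
  simp only [inner_momentum_eq]
  simp only [sum_sub_distrib, sum_add_distrib]
  rw [sum_sum_erase_mul_inner_sub_self dadd hdadd u, advection, pressure]
  ring

end

theorem total_energy_dissipation_general
    (d N : ℕ)
    (u : Fin N → EuclideanSpace ℝ (Fin d)) (p : Fin N → ℝ)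
    (c : Fin N → Fin N → EuclideanSpace ℝ (Fin d))
    (hc : ∀ i j, c j i = -c i j)
    (atil dadd dp : Fin N → Fin N → ℝ)
    (hatil : ∀ i j, atil i j = ⟪((1 : ℝ) / 2) • (u j + u i), c i j⟫)
    (hdadd_symm : ∀ i j, dadd i j = dadd j i)
    (hdp_symm : ∀ i j, dp i j = dp j i)
    (RHS : Fin N → EuclideanSpace ℝ (Fin d))
    (hRHS : ∀ i, RHS i =
      (∑ j ∈ Finset.univ.erase i,
        ((dadd i j - atil i j) • (u j - u i) - (p j - p i) • c i j))
      - (∑ j ∈ Finset.univ.erase i, atil i j) • u i)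
    (hcont : ∀ i, ∑ j ∈ Finset.univ.erase i,
      (dp i j * (p j - p i) - ⟪u j + u i, c i j⟫) = 0) :
    (∑ i, ⟪u i, RHS i⟫ =
      -∑ i, ∑ j ∈ Finset.univ.erase i,
        ((dadd i j / 2) * ‖u j - u i‖ ^ 2 + (dp i j / 2) * (p j - p i) ^ 2)) ∧
    ((∀ i j, i ≠ j → 0 ≤ dadd i j) → (∀ i j, i ≠ j → 0 ≤ dp i j) →
      ∑ i, ⟪u i, RHS i⟫ ≤ 0) := by
  have energy : ∑ i, ⟪u i, RHS i⟫ = -∑ i, ∑ j ∈ univ.erase i,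
      (dadd i j / 2 * ‖u j - u i‖ ^ 2 + dp i j / 2 * (p j - p i) ^ 2) := by
    simp only [hRHS]
    exact sum_inner_momentum_eq_neg_dissipation u p c hc atil dadd dp hatil hdadd_symm hdp_symm
      hcont
  refine ⟨energy, fun hdadd_nonneg hdp_nonneg => ?_⟩
  rw [energy, neg_nonpos]
  refine sum_nonneg fun i _ => sum_nonneg fun j hj => ?_
  have hij : i ≠ j := (mem_erase.mp hj).1.symm
  exact add_nonneg (mul_nonneg (div_nonneg (hdadd_nonneg i j hij) zero_le_two) (sq_nonneg _))
    (mul_nonneg (div_nonneg (hdp_nonneg i j hij) zero_le_two) (sq_nonneg _))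

/-- Total energy production equals total dissipation: under the discrete
continuity constraint at every node,
`Σ_i ⟪u i, RHS i⟫ = -Σ_i Σ_{j ≠ i} ((dadd i j / 2)·‖u j - u i‖² + (dp i j / 2)·(p j - p i)²)`;
in particular, it is nonpositive if `dadd` and `dp` are nonnegative off the diagonal. -/
theorem total_energy_dissipation
    (d N : ℕ) (hd : 1 ≤ d) (hN : 1 ≤ N)
    (u : Fin N → EuclideanSpace ℝ (Fin d)) (p : Fin N → ℝ)
    (c : Fin N → Fin N → EuclideanSpace ℝ (Fin d))
    (hc : ∀ i j, c j i = -c i j)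
    (atil dadd dp : Fin N → Fin N → ℝ)
    (hatil : ∀ i j, atil i j = ⟪((1 : ℝ) / 2) • (u j + u i), c i j⟫)
    (hdadd_symm : ∀ i j, dadd i j = dadd j i)
    (hdp_symm : ∀ i j, dp i j = dp j i)
    (RHS : Fin N → EuclideanSpace ℝ (Fin d))
    (hRHS : ∀ i, RHS i =
      (∑ j ∈ Finset.univ.erase i,
        ((dadd i j - atil i j) • (u j - u i) - (p j - p i) • c i j))
      - (∑ j ∈ Finset.univ.erase i, atil i j) • u i)
    (hcont : ∀ i, ∑ j ∈ Finset.univ.erase i,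
      (dp i j * (p j - p i) - ⟪u j + u i, c i j⟫) = 0) :
    (∑ i, ⟪u i, RHS i⟫ =
      -∑ i, ∑ j ∈ Finset.univ.erase i,
        ((dadd i j / 2) * ‖u j - u i‖ ^ 2 + (dp i j / 2) * (p j - p i) ^ 2)) ∧
    ((∀ i j, i ≠ j → 0 ≤ dadd i j) → (∀ i j, i ≠ j → 0 ≤ dp i j) →
      ∑ i, ⟪u i, RHS i⟫ ≤ 0) :=
  total_energy_dissipation_general d N u p c hc atil dadd dp hatil hdadd_symm hdp_symm RHS hRHS
    hcont
end

section
/- (Global energy stability of the Galerkin scheme.) Let m, s : Fin N → Fin N → ℝ be symmetric matrices, let a : ℝ → Fin N → Fin N → ℝ satisfy a t i j = -a t j i for all t, i, j, let c : Fin N → Fin N → E satisfy c j i = -c i j, and let ν ∈ ℝ. Suppose u : ℝ → Fin N → E is differentiable in time, p : ℝ → Fin N → ℝ, and for every t and i the consistent-mass Galerkin system holds: Σ_j m i j • (du/dt)(t) j = -Σ_j (a t i j + ν·s i j) • u t j - Σ_j p t j • c i j, together with the discrete divergence constraint Σ_j ⟪c k j, u t j⟫ = 0 for every k and t. Then for every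 t, the total kinetic energy E(t) := (1/2)·Σ_i Σ_j m i j·⟪u t i, u t j⟫ has derivative E'(t) = -ν·Σ_i Σ_j s i j·⟪u t i, u t j⟫. -/
open scoped RealInnerProductSpace BigOperators

/-!
Write `M(v, w) = Σ_i Σ_j m i j ⟪v i, w j⟫`. Since `m` is symmetric, `E' = M(u, u')`, and by the
Galerkin system `M(u, u') = Σ_i ⟪u i, (m u')_i⟫` splits into a convective, a viscous and a pressure
part. The convective part vanishes because `a t` is skew-symmetric, and the pressure part vanishes
because `c` is skew-symmetric, which turns it into the discrete divergence of `u` paired with `p`.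
Only the viscous part `-ν Σ_i Σ_j s i j ⟪u i, u j⟫` survives.
-/

namespace Galerkin

variable {ι E : Type*} [Fintype ι] [NormedAddCommGroup E] [InnerProductSpace ℝ E]

lemma sum_sum_mul_inner_eq_sum_inner_sum_smul (m : ι → ι → ℝ) (v w : ι → E) :
    ∑ i, ∑ j, m i j * ⟪v i, w j⟫ = ∑ i, ⟪v i, ∑ j, m i j • w j⟫ := by
  simp only [inner_sum, real_inner_smul_right]

lemma sum_sum_mul_inner_comm_of_symm (m : ι → ι → ℝ) (hm : ∀ i j, m i j = m j i)
    (v w : ι → E) :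
    ∑ i, ∑ j, m i j * ⟪w i, v j⟫ = ∑ i, ∑ j, m i j * ⟪v i, w j⟫ := by
  rw [Finset.sum_comm]
  simp only [hm _ _, real_inner_comm]

lemma sum_sum_mul_inner_self_eq_zero_of_skew (a : ι → ι → ℝ) (ha : ∀ i j, a i j = -a j i)
    (v : ι → E) :
    ∑ i, ∑ j, a i j * ⟪v i, v j⟫ = 0 := by
  have hneg : ∑ i, ∑ j, a i j * ⟪v i, v j⟫ = -∑ i, ∑ j, a i j * ⟪v i, v j⟫ := by
    conv_lhs => rw [Finset.sum_comm]
    rw [← Finset.sum_neg_distrib]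
    refine Finset.sum_congr rfl fun i _ => ?_
    rw [← Finset.sum_neg_distrib]
    refine Finset.sum_congr rfl fun j _ => ?_
    rw [ha j i, real_inner_comm]
    ring
  linarith

lemma sum_inner_sum_smul_eq_zero_of_div_free (p : ι → ℝ) (c : ι → ι → E)
    (hc : ∀ i j, c j i = -c i j) (v : ι → E) (hdiv : ∀ k, ∑ j, ⟪c k j, v j⟫ = 0) :
    ∑ i, ⟪v i, ∑ j, p j • c i j⟫ = 0 := by
  simp only [inner_sum, real_inner_smul_right]
  rw [Finset.sum_comm]
  refine Finset.sum_eq_zero fun k _ => ?_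
  rw [← Finset.mul_sum]
  have hk : ∑ i, ⟪v i, c i k⟫ = -∑ i, ⟪c k i, v i⟫ := by
    rw [← Finset.sum_neg_distrib]
    refine Finset.sum_congr rfl fun i _ => ?_
    rw [hc k i, inner_neg_right, real_inner_comm]
  rw [hk, hdiv k, neg_zero, mul_zero]

lemma hasDerivAt_sum_sum_mul_inner_self (m : ι → ι → ℝ) (hm : ∀ i j, m i j = m j i)
    {u : ℝ → ι → E} {u' : ι → E} {t : ℝ} (hu : ∀ i, HasDerivAt (fun τ => u τ i) (u' i) t) :
    HasDerivAt (fun τ => ∑ i, ∑ j, m i j * ⟪u τ i, u τ j⟫)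
      (2 * ∑ i, ∑ j, m i j * ⟪u t i, u' j⟫) t := by
  have hderiv : HasDerivAt (fun τ => ∑ i, ∑ j, m i j * ⟪u τ i, u τ j⟫)
      (∑ i, ∑ j, m i j * (⟪u t i, u' j⟫ + ⟪u' i, u t j⟫)) t :=
    HasDerivAt.fun_sum fun i _ => HasDerivAt.fun_sum fun j _ =>
      (((hu i).inner ℝ (hu j)).const_mul (m i j)).congr_deriv (by ring)
  refine hderiv.congr_deriv ?_
  simp only [mul_add, Finset.sum_add_distrib, sum_sum_mul_inner_comm_of_symm m hm]
  ring

lemma sum_sum_mul_inner_eq_of_galerkin (m s a : ι → ι → ℝ) (ha : ∀ i j, a i j = -a j i)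
    (c : ι → ι → E) (hc : ∀ i j, c j i = -c i j) (ν : ℝ) (p : ι → ℝ) (v w : ι → E)
    (hsys : ∀ i, ∑ j, m i j • w j = -(∑ j, (a i j + ν * s i j) • v j) - ∑ j, p j • c i j)
    (hdiv : ∀ k, ∑ j, ⟪c k j, v j⟫ = 0) :
    ∑ i, ∑ j, m i j * ⟪v i, w j⟫ = -ν * ∑ i, ∑ j, s i j * ⟪v i, v j⟫ := by
  calc ∑ i, ∑ j, m i j * ⟪v i, w j⟫ = ∑ i, ⟪v i, ∑ j, m i j • w j⟫ :=
        sum_sum_mul_inner_eq_sum_inner_sum_smul m v w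
    _ = -(∑ i, ∑ j, (a i j + ν * s i j) * ⟪v i, v j⟫) - ∑ i, ⟪v i, ∑ j, p j • c i j⟫ := by
        simp only [hsys, inner_sub_right, inner_neg_right, Finset.sum_sub_distrib,
          Finset.sum_neg_distrib, sum_sum_mul_inner_eq_sum_inner_sum_smul]
    _ = -ν * ∑ i, ∑ j, s i j * ⟪v i, v j⟫ := by
        simp only [sum_inner_sum_smul_eq_zero_of_div_free p c hc v hdiv, add_mul,
          Finset.sum_add_distrib, sum_sum_mul_inner_self_eq_zero_of_skew a ha, mul_assoc,
          ← Finset.mul_sum]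
        ring

end Galerkin

open Galerkin in
theorem global_energy_stability_galerkin_general
    (d N : ℕ)
    (m s : Fin N → Fin N → ℝ)
    (hm_symm : ∀ i j, m i j = m j i)
    (a : ℝ → Fin N → Fin N → ℝ)
    (ha_skew : ∀ t i j, a t i j = -a t j i)
    (c : Fin N → Fin N → EuclideanSpace ℝ (Fin d))
    (hc : ∀ i j, c j i = -c i j)
    (ν : ℝ)
    (u : ℝ → Fin N → EuclideanSpace ℝ (Fin d))
    (u' : ℝ → Fin N → EuclideanSpace ℝ (Fin d))
    (p : ℝ → Fin N → ℝ)
    (hu' : ∀ i t, HasDerivAt (fun τ => u τ i) (u' t i) t)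
    (hsys : ∀ t i, ∑ j, m i j • u' t j =
      -(∑ j, (a t i j + ν * s i j) • u t j) - ∑ j, p t j • c i j)
    (hdiv : ∀ t k, ∑ j, ⟪c k j, u t j⟫ = 0) :
    ∀ t, HasDerivAt
      (fun τ => (1 / 2 : ℝ) * ∑ i, ∑ j, m i j * ⟪u τ i, u τ j⟫)
      (-ν * ∑ i, ∑ j, s i j * ⟪u t i, u t j⟫) t := by
  intro t
  refine ((hasDerivAt_sum_sum_mul_inner_self m hm_symm (hu' · t)).const_mul _).congr_deriv ?_
  rw [sum_sum_mul_inner_eq_of_galerkin m s (a t) (ha_skew t) c hc ν (p t) (u t) (u' t)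
    (hsys t) (hdiv t)]
  ring

/-- Global energy stability of the consistent-mass Galerkin scheme
(Remark on energy): the total kinetic energy
`E(t) = (1/2)·Σ_i Σ_j m i j·⟪u t i, u t j⟫` satisfies
`E'(t) = -ν·Σ_i Σ_j s i j·⟪u t i, u t j⟫`. -/
theorem global_energy_stability_galerkin
    (d N : ℕ) (hd : 1 ≤ d) (hN : 1 ≤ N)
    (m s : Fin N → Fin N → ℝ)
    (hm_symm : ∀ i j, m i j = m j i)
    (hs_symm : ∀ i j, s i j = s j i)
    (a : ℝ → Fin N → Fin N → ℝ)
    (ha_skew : ∀ t i j, a t i j = -a t j i)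
    (c : Fin N → Fin N → EuclideanSpace ℝ (Fin d))
    (hc : ∀ i j, c j i = -c i j)
    (ν : ℝ)
    (u : ℝ → Fin N → EuclideanSpace ℝ (Fin d))
    (u' : ℝ → Fin N → EuclideanSpace ℝ (Fin d))
    (p : ℝ → Fin N → ℝ)
    (hu' : ∀ i t, HasDerivAt (fun τ => u τ i) (u' t i) t)
    (hsys : ∀ t i, ∑ j, m i j • u' t j =
      -(∑ j, (a t i j + ν * s i j) • u t j) - ∑ j, p t j • c i j)
    (hdiv : ∀ t k, ∑ j, ⟪c k j, u t j⟫ = 0) :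
    ∀ t, HasDerivAt
      (fun τ => (1 / 2 : ℝ) * ∑ i, ∑ j, m i j * ⟪u τ i, u τ j⟫)
      (-ν * ∑ i, ∑ j, s i j * ⟪u t i, u t j⟫) t :=
  global_energy_stability_galerkin_general d N m s hm_symm a ha_skew c hc ν u u' p hu' hsys hdiv
end

section
/- (Rewriting of the velocity stabilization term.) Let b : Fin N → Fin N → ℝ be skew-symmetric (b j i = -b i j) with zero row sums (Σ_j b i j = 0 for every i), and let D : Fin N → Fin N → ℝ be symmetric (D i j = D j i) with zero row sums (Σ_j D i j = 0 for every i). Then for all u, v : Fin N → E, Σ_i ⟪v i, Σ_j (b i j + D i j) • u j⟫ = - Σ_{i < j} b i j·⟪u j + u i, v j - v i⟫ - Σ_{i < j} D i j·⟪u j - u i, v j - v i⟫. -/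
/-!
Subtracting `⟪v j, u j⟫` (allowed by the zero column sums of `b`) or `⟪v i, u i⟫` (allowed by the
zero row sums of `D`) from the `(i, j)` term leaves a double sum with zero diagonal. Pairing the
terms `(i, j)` and `(j, i)` for `i < j` and using that `b` is skew and `D` symmetric turns each pair
into the corresponding term on the right.
-/

open scoped RealInnerProductSpace

open Finset

theorem Finset.sum_sum_eq_sum_sum_lt_add_swap {ι M : Type*} [Fintype ι] [LinearOrder ι]
    [AddCommMonoid M] (F : ι → ι → M) (hF : ∀ i, F i i = 0) :
    ∑ i, ∑ j, F i j = ∑ i, ∑ j ∈ univ.filter (fun j => i < j), (F i j + F j i) := by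
  have split_row (i : ι) : ∑ j, F i j
      = ∑ j ∈ univ.filter (fun j => i < j), F i j + ∑ j ∈ univ.filter (fun j => j < i), F i j := by
    rw [← sum_filter_add_sum_filter_not univ (fun j => i < j)]
    congr 1
    refine (sum_subset (fun j hj => ?_) fun j hj hji => ?_).symm
    · simpa using (mem_filter.1 hj).2.le
    · obtain rfl : j = i := by simp_all [le_antisymm_iff]
      exact hF j
  simp only [split_row, sum_add_distrib]
  congr 1
  exact sum_comm' fun i j => by simp

section

variable {ι E : Type*} [Fintype ι] [LinearOrder ι] [NormedAddCommGroup E] [InnerProductSpace ℝ E]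

theorem sum_inner_sum_smul_eq_neg_sum_lt_of_skew (b : ι → ι → ℝ) (hskew : ∀ i j, b j i = -b i j)
    (hcols : ∀ j, ∑ i, b i j = 0) (u v : ι → E) :
    ∑ i, ⟪v i, ∑ j, b i j • u j⟫
      = -∑ i, ∑ j ∈ univ.filter (fun j => i < j), b i j * ⟪u j + u i, v j - v i⟫ := by
  have hdiag : ∑ i, ∑ j, b i j * ⟪v j, u j⟫ = 0 := by
    rw [sum_comm]
    exact sum_eq_zero fun j _ => by rw [← sum_mul, hcols, zero_mul]
  calc ∑ i, ⟪v i, ∑ j, b i j • u j⟫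
      = ∑ i, ∑ j, b i j * ⟪v i - v j, u j⟫ := by
        simp only [inner_sum, real_inner_smul_right, inner_sub_left, mul_sub, sum_sub_distrib,
          hdiag, sub_zero]
    _ = ∑ i, ∑ j ∈ univ.filter (fun j => i < j),
          (b i j * ⟪v i - v j, u j⟫ + b j i * ⟪v j - v i, u i⟫) :=
        sum_sum_eq_sum_sum_lt_add_swap _ fun i => by simp
    _ = _ := by
        simp only [← sum_neg_distrib]
        refine sum_congr rfl fun i _ => sum_congr rfl fun j _ => ?_
        rw [hskew i j, real_inner_comm _ (u j + u i)]
        simp only [inner_sub_left, inner_add_right]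
        ring

theorem sum_inner_sum_smul_eq_neg_sum_lt_of_symm (D : ι → ι → ℝ) (hsymm : ∀ i j, D i j = D j i)
    (hrows : ∀ i, ∑ j, D i j = 0) (u v : ι → E) :
    ∑ i, ⟪v i, ∑ j, D i j • u j⟫
      = -∑ i, ∑ j ∈ univ.filter (fun j => i < j), D i j * ⟪u j - u i, v j - v i⟫ := by
  have hdiag : ∑ i, ∑ j, D i j * ⟪v i, u i⟫ = 0 :=
    sum_eq_zero fun i _ => by rw [← sum_mul, hrows, zero_mul]
  calc ∑ i, ⟪v i, ∑ j, D i j • u j⟫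
      = ∑ i, ∑ j, D i j * ⟪v i, u j - u i⟫ := by
        simp only [inner_sum, real_inner_smul_right, inner_sub_right, mul_sub, sum_sub_distrib,
          hdiag, sub_zero]
    _ = ∑ i, ∑ j ∈ univ.filter (fun j => i < j),
          (D i j * ⟪v i, u j - u i⟫ + D j i * ⟪v j, u i - u j⟫) :=
        sum_sum_eq_sum_sum_lt_add_swap _ fun i => by simp
    _ = _ := by
        simp only [← sum_neg_distrib]
        refine sum_congr rfl fun i _ => sum_congr rfl fun j _ => ?_
        rw [← hsymm i j, real_inner_comm _ (u j - u i)]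
        simp only [inner_sub_left, inner_sub_right]
        ring

end

theorem velocity_stabilization_rewriting_general
    (d N : ℕ)
    (b D : Fin N → Fin N → ℝ)
    (hb_skew : ∀ i j, b j i = -b i j)
    (hb_rows : ∀ i, ∑ j, b i j = 0)
    (hD_symm : ∀ i j, D i j = D j i)
    (hD_rows : ∀ i, ∑ j, D i j = 0)
    (u v : Fin N → EuclideanSpace ℝ (Fin d)) :
    ∑ i, ⟪v i, ∑ j, (b i j + D i j) • u j⟫
      = (-∑ i, ∑ j ∈ Finset.univ.filter (fun j => i < j),
          b i j * ⟪u j + u i, v j - v i⟫)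
        - ∑ i, ∑ j ∈ Finset.univ.filter (fun j => i < j),
            D i j * ⟪u j - u i, v j - v i⟫ := by
  have hb_cols (j : Fin N) : ∑ i, b i j = 0 := by
    simp only [hb_skew j, sum_neg_distrib, hb_rows, neg_zero]
  simp only [add_smul, sum_add_distrib, inner_add_right]
  rw [sum_inner_sum_smul_eq_neg_sum_lt_of_skew b hb_skew hb_cols,
    sum_inner_sum_smul_eq_neg_sum_lt_of_symm D hD_symm hD_rows,
    sub_eq_add_neg]

/-- Rewriting of the velocity stabilization term: for skew-symmetric `b` and
symmetric `D`, both with zero row sums,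
`Σ_i ⟪v i, Σ_j (b i j + D i j) • u j⟫
  = -Σ_{i<j} b i j·⟪u j + u i, v j - v i⟫ - Σ_{i<j} D i j·⟪u j - u i, v j - v i⟫`. -/
theorem velocity_stabilization_rewriting
    (d N : ℕ) (hd : 1 ≤ d) (hN : 1 ≤ N)
    (b D : Fin N → Fin N → ℝ)
    (hb_skew : ∀ i j, b j i = -b i j)
    (hb_rows : ∀ i, ∑ j, b i j = 0)
    (hD_symm : ∀ i j, D i j = D j i)
    (hD_rows : ∀ i, ∑ j, D i j = 0)
    (u v : Fin N → EuclideanSpace ℝ (Fin d)) :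
    ∑ i, ⟪v i, ∑ j, (b i j + D i j) • u j⟫
      = (-∑ i, ∑ j ∈ Finset.univ.filter (fun j => i < j),
          b i j * ⟪u j + u i, v j - v i⟫)
        - ∑ i, ∑ j ∈ Finset.univ.filter (fun j => i < j),
            D i j * ⟪u j - u i, v j - v i⟫ :=
  velocity_stabilization_rewriting_general d N b D hb_skew hb_rows hD_symm hD_rows u v
end

section
/- (Rewriting of the discretized pressure gradient term.) Let c : Fin N → Fin N → E satisfy c j i = -c i j for all i, j and Σ_j c i j = 0 for every i. Then for all v : Fin N → E and p : Fin N → ℝ, Σ_i ⟪v i, Σ_j p j • c i j⟫ = Σ_{i < j} (p j + p i)·⟪c i j, v i - v j⟫. -/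
open scoped RealInnerProductSpace BigOperators

open Finset

theorem Finset.sum_sum_eq_sum_lt_add_swap {ι M : Type*} [Fintype ι] [LinearOrder ι]
    [AddCommMonoid M] (f : ι → ι → M) (hdiag : ∀ i, f i i = 0) :
    ∑ i, ∑ j, f i j = ∑ i, ∑ j with i < j, (f i j + f j i) := by
  have hrow : ∀ i, ∑ j, f i j = ∑ j with i < j, f i j + ∑ j with j < i, f i j := by
    intro i
    rw [← sum_filter_add_sum_filter_not univ (i < ·)]
    congr 1
    refine (sum_subset (fun j hj => ?_) (fun j hj hji => ?_)).symm
    · simp_all [le_of_lt]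
    · simp only [mem_filter, mem_univ, true_and, not_lt] at hj hji
      rw [le_antisymm hj hji, hdiag]
  have hswap : ∑ i, ∑ j with j < i, f i j = ∑ i, ∑ j with i < j, f j i := by
    simp_rw [sum_filter]
    exact sum_comm
  simp_rw [hrow, sum_add_distrib, hswap]

theorem sum_sum_inner_eq_sum_lt_inner_sub {ι E : Type*} [Fintype ι] [LinearOrder ι]
    [NormedAddCommGroup E] [InnerProductSpace ℝ E] (a : ι → ι → E)
    (ha : ∀ i j, a j i = -a i j) (v : ι → E) :
    ∑ i, ∑ j, ⟪a i j, v i⟫ = ∑ i, ∑ j with i < j, ⟪a i j, v i - v j⟫ := by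
  have hdiag : ∀ i, ⟪a i i, v i⟫ = 0 := fun i =>
    self_eq_neg.mp (by rw [← inner_neg_left, ← ha])
  rw [sum_sum_eq_sum_lt_add_swap (fun i j => ⟪a i j, v i⟫) hdiag]
  refine sum_congr rfl fun i _ => sum_congr rfl fun j _ => ?_
  rw [ha i j, inner_neg_left, inner_sub_right, sub_eq_add_neg]

theorem pressure_gradient_rewriting_general
    (d N : ℕ)
    (c : Fin N → Fin N → EuclideanSpace ℝ (Fin d))
    (hc_skew : ∀ i j, c j i = -c i j)
    (hc_rows : ∀ i, ∑ j, c i j = 0)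
    (v : Fin N → EuclideanSpace ℝ (Fin d))
    (p : Fin N → ℝ) :
    ∑ i, ⟪v i, ∑ j, p j • c i j⟫
      = ∑ i, ∑ j ∈ Finset.univ.filter (fun j => i < j),
          (p j + p i) * ⟪c i j, v i - v j⟫ := by
  -- Adding `p i • Σ_j c i j = 0` to row `i` makes the weights skew-symmetric.
  have hrow : ∀ i, ⟪v i, ∑ j, p j • c i j⟫ = ∑ j, ⟪(p j + p i) • c i j, v i⟫ := by
    intro i
    have hzero : ∑ j, ⟪p i • c i j, v i⟫ = 0 := by
      rw [← sum_inner, ← smul_sum, hc_rows, smul_zero, inner_zero_left]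
    simp_rw [inner_sum, add_smul, inner_add_left, sum_add_distrib, hzero, add_zero]
    exact sum_congr rfl fun j _ => real_inner_comm _ _
  have hskew : ∀ i j, (p i + p j) • c j i = -((p j + p i) • c i j) := by
    intro i j
    rw [hc_skew, smul_neg, add_comm]
  simp_rw [hrow, sum_sum_inner_eq_sum_lt_inner_sub _ hskew, real_inner_smul_left]

/-- Rewriting of the discretized pressure gradient term: for `c` with
`c j i = -c i j` and zero row sums,
`Σ_i ⟪v i, Σ_j p j • c i j⟫ = Σ_{i<j} (p j + p i)·⟪c i j, v i - v j⟫`. -/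
theorem pressure_gradient_rewriting
    (d N : ℕ) (hd : 1 ≤ d) (hN : 1 ≤ N)
    (c : Fin N → Fin N → EuclideanSpace ℝ (Fin d))
    (hc_skew : ∀ i j, c j i = -c i j)
    (hc_rows : ∀ i, ∑ j, c i j = 0)
    (v : Fin N → EuclideanSpace ℝ (Fin d))
    (p : Fin N → ℝ) :
    ∑ i, ⟪v i, ∑ j, p j • c i j⟫
      = ∑ i, ∑ j ∈ Finset.univ.filter (fun j => i < j),
          (p j + p i) * ⟪c i j, v i - v j⟫ :=
  pressure_gradient_rewriting_general d N c hc_skew hc_rows v p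
end

section
/- (Mass lumping error identity.) Let m : Fin N → Fin N → ℝ be symmetric (m i j = m j i) and define the lumped masses mL i := Σ_j m i j. Then for all p, q : Fin N → ℝ, Σ_i Σ_j m i j·p j·q i - Σ_i mL i·p i·q i = - Σ_{i < j} m i j·(p j - p i)·(q j - q i). -/
/-!
Expanding `(p j - p i) * (q j - q i)` and using the symmetry of `m` to swap the summation
indices, the full double sum `∑ i, ∑ j, m i j * (p j - p i) * (q j - q i)` equals twice the
lumping error with the opposite sign. Its summand is symmetric in `i, j` and vanishes on the
diagonal, so the full double sum is also twice the sum over the pairs `i < j`.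
-/

open Finset

section

variable {ι : Type*} [Fintype ι]

theorem sum_sum_eq_two_smul_sum_sum_lt {M : Type*} [LinearOrder ι] [AddCommMonoid M]
    (F : ι → ι → M) (hF : ∀ i j, F i j = F j i) (hdiag : ∀ i, F i i = 0) :
    ∑ i, ∑ j, F i j = 2 • ∑ i, ∑ j ∈ univ.filter (fun j => i < j), F i j := by
  have hsplit : ∀ i j, F i j = (if i < j then F i j else 0) + if j < i then F j i else 0 := by
    intro i j
    rcases lt_trichotomy i j with h | rfl | h
    · simp [h, h.not_gt]
    · simp [hdiag]
    · simp [h, h.not_gt, hF i j]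
  calc ∑ i, ∑ j, F i j
      = (∑ i, ∑ j, if i < j then F i j else 0) + ∑ i, ∑ j, if j < i then F j i else 0 := by
        simp only [← sum_add_distrib, ← hsplit]
    _ = 2 • ∑ i, ∑ j ∈ univ.filter (fun j => i < j), F i j := by
        rw [sum_comm (f := fun i j => if j < i then F j i else 0), two_smul]
        simp only [sum_filter]

variable {R : Type*} [CommRing R]

theorem sum_sum_mul_comm_of_symm (m : ι → ι → R) (hm : ∀ i j, m i j = m j i)
    (f : ι → ι → R) : ∑ i, ∑ j, m i j * f i j = ∑ i, ∑ j, m i j * f j i := by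
  rw [sum_comm]
  simp only [hm]

theorem sum_sum_mul_sub_mul_sub_of_symm (m : ι → ι → R) (hm : ∀ i j, m i j = m j i)
    (p q : ι → R) :
    ∑ i, ∑ j, m i j * (p j - p i) * (q j - q i)
      = 2 * (∑ i, (∑ j, m i j) * p i * q i - ∑ i, ∑ j, m i j * p j * q i) := by
  have hdiag := sum_sum_mul_comm_of_symm m hm fun i _ => p i * q i
  have hcross := sum_sum_mul_comm_of_symm m hm fun i j => p j * q i
  simp only [sum_mul, mul_sub, sub_mul, sum_sub_distrib, mul_assoc]
  linear_combination hcross - hdiag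

end

theorem mass_lumping_error_identity_general
    (N : ℕ)
    (m : Fin N → Fin N → ℝ)
    (hm_symm : ∀ i j, m i j = m j i)
    (mL : Fin N → ℝ)
    (hmL : ∀ i, mL i = ∑ j, m i j)
    (p q : Fin N → ℝ) :
    (∑ i, ∑ j, m i j * p j * q i) - ∑ i, mL i * p i * q i
      = -∑ i, ∑ j ∈ Finset.univ.filter (fun j => i < j),
          m i j * (p j - p i) * (q j - q i) := by
  have hhalf := sum_sum_eq_two_smul_sum_sum_lt (fun i j => m i j * (p j - p i) * (q j - q i))
    (fun i j => by rw [hm_symm]; ring) (fun i => by ring)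
  have hfull := sum_sum_mul_sub_mul_sub_of_symm m hm_symm p q
  simp only [← hmL] at hfull
  rw [two_smul] at hhalf
  linarith

/-- Mass lumping error identity: for a symmetric matrix `m` with lumped
masses `mL i = Σ_j m i j`,
`Σ_i Σ_j m i j·p j·q i - Σ_i mL i·p i·q i = -Σ_{i<j} m i j·(p j - p i)·(q j - q i)`. -/
theorem mass_lumping_error_identity
    (N : ℕ) (hN : 1 ≤ N)
    (m : Fin N → Fin N → ℝ)
    (hm_symm : ∀ i j, m i j = m j i)
    (mL : Fin N → ℝ)
    (hmL : ∀ i, mL i = ∑ j, m i j)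
    (p q : Fin N → ℝ) :
    (∑ i, ∑ j, m i j * p j * q i) - ∑ i, mL i * p i * q i
      = -∑ i, ∑ j ∈ Finset.univ.filter (fun j => i < j),
          m i j * (p j - p i) * (q j - q i) :=
  mass_lumping_error_identity_general N m hm_symm mL hmL p q
end
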